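/- Given a Heisenberg structure on (M, α), for every smooth function H the vector field X = H·Z − Σᵢ (A_i(H)·B_i − B_i(H)·A_i) is a contact vector field with α(X) = H; i.e., it equals the contact vector field X_H with contact Hamiltonian H. -/

import Mathlib

noncomputable section

variable {E : Type*} [NormedAddCommGroup E] [NormedSpace ℝ E]

/-- The exterior derivative of a 1-form `α` on a vector space, evaluated at
`x` on the pair of vectors `(u, v)`: `dα_x(u,v)`. -/
def extD (α : E → E →L[ℝ] ℝ) (x u v : E) : ℝ :=
  fderiv ℝ α x u v - fderiv ℝ α x v u

/-- The Lie derivative of the 1-form `α` along the vector field `X`,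
evaluated at `x` on the vector `v` (algebraic definition
`(L_X α)(Y) = X(α(Y)) - α([X,Y])` applied to a constant field `Y = v`). -/
def lieD (X : E → E) (α : E → E →L[ℝ] ℝ) (x v : E) : ℝ :=
  fderiv ℝ (fun y => α y v) x (X x) + α x (fderiv ℝ X x v)

/-- The Lie bracket of vector fields on a vector space. -/
def lieB (X Y : E → E) (x : E) : E :=
  fderiv ℝ Y x (X x) - fderiv ℝ X x (Y x)

/-- A vector field is contact if `L_X α = f·α` for some function `f`. -/
def IsContactVF (α : E → E →L[ℝ] ℝ) (X : E → E) : Prop :=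
  ∃ f : E → ℝ, ∀ x v, lieD X α x v = f x * α x v

/-- A vector field is tangent to the contact distribution if `α(X) = 0`. -/
def IsTangentVF (α : E → E →L[ℝ] ℝ) (X : E → E) : Prop :=
  ∀ x, α x (X x) = 0

/-- `Z` is the Reeb field of `α`: `α(Z) = 1` and `i_Z dα = 0`. -/
def IsReeb (α : E → E →L[ℝ] ℝ) (Z : E → E) : Prop :=
  (∀ x, α x (Z x) = 1) ∧ ∀ x v, extD α x (Z x) v = 0

/-- Nondegeneracy of `dα` on the contact distribution `ξ = ker α`. -/
def NondegOnKer (α : E → E →L[ℝ] ℝ) : Prop :=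
  ∀ x v, α x v = 0 → (∀ w, α x w = 0 → extD α x v w = 0) → v = 0

/-- A Heisenberg structure on `(M, α)`: vector fields `A₁,…,Aₙ, B₁,…,Bₙ, Z`
with `Z` the Reeb field, `Aᵢ, Bⱼ` tangent to the contact distribution and
linearly independent at every point, `[Aᵢ,Bⱼ] = δᵢⱼ Z`, all other brackets
vanishing. -/
structure IsHeisenberg {E : Type*} [NormedAddCommGroup E] [NormedSpace ℝ E]
    (n : ℕ) (α : E → E →L[ℝ] ℝ) (A B : Fin n → E → E) (Z : E → E) : Prop where
  reeb : IsReeb α Z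
  tangentA : ∀ i, IsTangentVF α (A i)
  tangentB : ∀ j, IsTangentVF α (B j)
  indep : ∀ x, LinearIndependent ℝ
    (Sum.elim (fun i : Fin n => A i x) (fun j : Fin n => B j x))
  smoothA : ∀ i, ContDiff ℝ (⊤ : ℕ∞) (A i)
  smoothB : ∀ j, ContDiff ℝ (⊤ : ℕ∞) (B j)
  smoothZ : ContDiff ℝ (⊤ : ℕ∞) Z
  bracketAB : ∀ i j x, lieB (A i) (B j) x = if i = j then Z x else 0
  bracketAA : ∀ i j x, lieB (A i) (A j) x = 0
  bracketBB : ∀ i j x, lieB (B i) (B j) x = 0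
  bracketAZ : ∀ i x, lieB (A i) Z x = 0
  bracketBZ : ∀ j x, lieB (B j) Z x = 0

/-
By Cartan's formula, `L_X α = i_X dα + d(α(X)) = i_X dα + dH`, so it suffices to check
`i_X dα + dH = Z(H) · α` on the frame `Z, A_i, B_i`, a basis by the dimension count.
For fields on which `α` is constant, `dα(Y, W) = -α([Y, W])`; the Heisenberg relations thus give
`dα(A_i, B_j) = -δ_ij` and `dα(A_i, A_j) = dα(B_i, B_j) = 0`, while `i_Z dα = 0` as `Z` is Reeb.
Hence `i_X dα` takes the values `0, -A_j(H), -B_j(H)` on `Z, A_j, B_j`.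
-/

def extDForm (α : E → E →L[ℝ] ℝ) (x : E) : E →L[ℝ] E →L[ℝ] ℝ :=
  fderiv ℝ α x - (fderiv ℝ α x).flip

@[simp]
lemma extDForm_apply (α : E → E →L[ℝ] ℝ) (x u v : E) : extDForm α x u v = extD α x u v := rfl

lemma extD_swap (α : E → E →L[ℝ] ℝ) (x u v : E) : extD α x u v = -extD α x v u := by
  unfold extD; ring

lemma fderiv_apply_field {α : E → E →L[ℝ] ℝ} {W : E → E} {x : E}
    (hα : DifferentiableAt ℝ α x) (hW : DifferentiableAt ℝ W x) (u : E) :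
    fderiv ℝ (fun y => α y (W y)) x u = fderiv ℝ α x u (W x) + α x (fderiv ℝ W x u) := by
  simp [fderiv_clm_apply hα hW, add_comm]

/-- Cartan's formula. -/
lemma lieD_eq_extD_add_fderiv {α : E → E →L[ℝ] ℝ} {X : E → E} {x : E}
    (hα : DifferentiableAt ℝ α x) (hX : DifferentiableAt ℝ X x) (v : E) :
    lieD X α x v = extD α x (X x) v + fderiv ℝ (fun y => α y (X y)) x v := by
  rw [lieD, fderiv_apply_field hα hX, fderiv_apply_field hα (differentiableAt_const v)]
  simp only [fderiv_fun_const, Pi.zero_apply, zero_apply, map_zero, add_zero, extD]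
  ring

lemma extD_apply_fields {α : E → E →L[ℝ] ℝ} {Y W : E → E} {x : E}
    (hα : DifferentiableAt ℝ α x) (hY : DifferentiableAt ℝ Y x) (hW : DifferentiableAt ℝ W x) :
    extD α x (Y x) (W x) = fderiv ℝ (fun y => α y (W y)) x (Y x)
      - fderiv ℝ (fun y => α y (Y y)) x (W x) - α x (lieB Y W x) := by
  rw [fderiv_apply_field hα hW, fderiv_apply_field hα hY, lieB, map_sub, extD]
  ring

lemma extD_apply_fields_of_const {α : E → E →L[ℝ] ℝ} {Y W : E → E} {x : E} {c d : ℝ}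
    (hα : DifferentiableAt ℝ α x) (hY : DifferentiableAt ℝ Y x) (hW : DifferentiableAt ℝ W x)
    (hαY : ∀ y, α y (Y y) = c) (hαW : ∀ y, α y (W y) = d) :
    extD α x (Y x) (W x) = -α x (lieB Y W x) := by
  simp [extD_apply_fields hα hY hW, hαY, hαW]

lemma extD_smul_sub_sum {ι : Type*} (α : E → E →L[ℝ] ℝ) (x : E) (c : ℝ) (z : E) (t : Finset ι)
    (a b : ι → ℝ) (u w : ι → E) (v : E) :
    extD α x (c • z - ∑ i ∈ t, (a i • u i - b i • w i)) v =
      c * extD α x z v - ∑ i ∈ t, (a i * extD α x (u i) v - b i * extD α x (w i) v) := by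
  change extDForm α x _ v = _
  simp

namespace IsHeisenberg

variable {n : ℕ} {α : E → E →L[ℝ] ℝ} {A B : Fin n → E → E} {Z : E → E}

lemma linearIndependent_frame (h : IsHeisenberg n α A B Z) (x : E) :
    LinearIndependent ℝ fun o : Option (Fin n ⊕ Fin n) =>
      Option.casesOn' o (Z x) (Sum.elim (fun i => A i x) (fun j => B j x)) := by
  refine (h.indep x).option fun hZ => ?_
  have hker : Submodule.span ℝ (Set.range (Sum.elim (fun i => A i x) (fun j => B j x))) ≤
      LinearMap.ker (α x : E →ₗ[ℝ] ℝ) := by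
    rw [Submodule.span_le]
    rintro _ ⟨k | k, rfl⟩
    · exact h.tangentA k x
    · exact h.tangentB k x
  have := hker hZ
  simp [h.reeb.1 x] at this

lemma ext_frame [FiniteDimensional ℝ E] (h : IsHeisenberg n α A B Z)
    (hdim : Module.finrank ℝ E = 2 * n + 1) (x : E) {φ ψ : E →L[ℝ] ℝ}
    (hZ : φ (Z x) = ψ (Z x)) (hA : ∀ i, φ (A i x) = ψ (A i x)) (hB : ∀ i, φ (B i x) = ψ (B i x)) :
    φ = ψ := by
  have hcard : Fintype.card (Option (Fin n ⊕ Fin n)) = Module.finrank ℝ E := by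
    simp [hdim]; ring
  let b := basisOfLinearIndependentOfCardEqFinrank (h.linearIndependent_frame x) hcard
  refine ContinuousLinearMap.coe_injective (b.ext fun k => ?_)
  rcases k with _ | i | i
  · simpa [b] using hZ
  · simpa [b] using hA i
  · simpa [b] using hB i

lemma differentiable_A (h : IsHeisenberg n α A B Z) (i : Fin n) : Differentiable ℝ (A i) :=
  (h.smoothA i).differentiable (by simp)

lemma differentiable_B (h : IsHeisenberg n α A B Z) (i : Fin n) : Differentiable ℝ (B i) :=
  (h.smoothB i).differentiable (by simp)

lemma extD_A_A (h : IsHeisenberg n α A B Z) {x : E} (hα : DifferentiableAt ℝ α x) (i j : Fin n) :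
    extD α x (A i x) (A j x) = 0 := by
  rw [extD_apply_fields_of_const hα (h.differentiable_A i x) (h.differentiable_A j x)
    (h.tangentA i) (h.tangentA j), h.bracketAA, map_zero, neg_zero]

lemma extD_B_B (h : IsHeisenberg n α A B Z) {x : E} (hα : DifferentiableAt ℝ α x) (i j : Fin n) :
    extD α x (B i x) (B j x) = 0 := by
  rw [extD_apply_fields_of_const hα (h.differentiable_B i x) (h.differentiable_B j x)
    (h.tangentB i) (h.tangentB j), h.bracketBB, map_zero, neg_zero]

lemma extD_A_B (h : IsHeisenberg n α A B Z) {x : E} (hα : DifferentiableAt ℝ α x) (i j : Fin n) :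
    extD α x (A i x) (B j x) = if i = j then -1 else 0 := by
  rw [extD_apply_fields_of_const hα (h.differentiable_A i x) (h.differentiable_B j x)
    (h.tangentA i) (h.tangentB j), h.bracketAB]
  split_ifs <;> simp [h.reeb.1 x]

lemma extD_Z_right (h : IsHeisenberg n α A B Z) (x u : E) : extD α x u (Z x) = 0 := by
  rw [extD_swap, h.reeb.2, neg_zero]

lemma apply_smul_sub_sum (h : IsHeisenberg n α A B Z) (x : E) (s : ℝ) (a b : Fin n → ℝ) :
    α x (s • Z x - ∑ i, (a i • B i x - b i • A i x)) = s := by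
  simp [h.reeb.1 x, h.tangentA _ x, h.tangentB _ x]

lemma extD_smul_sub_sum_Z (h : IsHeisenberg n α A B Z) (x : E) (s : ℝ) (a b : Fin n → ℝ) :
    extD α x (s • Z x - ∑ i, (a i • B i x - b i • A i x)) (Z x) = 0 := by
  rw [extD_smul_sub_sum]
  simp [h.extD_Z_right x]

lemma extD_smul_sub_sum_A (h : IsHeisenberg n α A B Z) {x : E} (hα : DifferentiableAt ℝ α x) (s : ℝ)
    (a b : Fin n → ℝ) (j : Fin n) :
    extD α x (s • Z x - ∑ i, (a i • B i x - b i • A i x)) (A j x) = -a j := by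
  rw [extD_smul_sub_sum]
  simp [extD_swap _ _ (B _ x), h.reeb.2 x, h.extD_A_A hα, h.extD_A_B hα]

lemma extD_smul_sub_sum_B (h : IsHeisenberg n α A B Z) {x : E} (hα : DifferentiableAt ℝ α x) (s : ℝ)
    (a b : Fin n → ℝ) (j : Fin n) :
    extD α x (s • Z x - ∑ i, (a i • B i x - b i • A i x)) (B j x) = -b j := by
  rw [extD_smul_sub_sum]
  simp [h.reeb.2 x, h.extD_B_B hα, h.extD_A_B hα]

end IsHeisenberg

/-- given a Heisenberg structure, for every smooth function `H`
the vector field `X = H·Z − Σᵢ (Aᵢ(H)·Bᵢ − Bᵢ(H)·Aᵢ)` is a contact vector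
field with `α(X) = H`, i.e. it is the contact field with Hamiltonian `H`. -/
theorem heisenberg_contact_field_formula {n : ℕ} [FiniteDimensional ℝ E]
    (hdim : Module.finrank ℝ E = 2 * n + 1)
    (α : E → E →L[ℝ] ℝ) (hα : ContDiff ℝ (⊤ : ℕ∞) α)
    (A B : Fin n → E → E) (Z : E → E)
    (h : IsHeisenberg n α A B Z)
    (H : E → ℝ) (hH : ContDiff ℝ (⊤ : ℕ∞) H)
    (X : E → E)
    (hX : ∀ x, X x = H x • Z x -
      ∑ i : Fin n,
        (fderiv ℝ H x (A i x) • B i x - fderiv ℝ H x (B i x) • A i x)) :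
    IsContactVF α X ∧ ∀ x, α x (X x) = H x := by
  have hαX : ∀ x, α x (X x) = H x := fun x => by rw [hX x, h.apply_smul_sub_sum]
  refine ⟨⟨fun x => fderiv ℝ H x (Z x), fun x v => ?_⟩, hαX⟩
  have hαd : DifferentiableAt ℝ α x := hα.differentiable (by simp) x
  have hXd : Differentiable ℝ X := by
    have hdH : ContDiff ℝ (⊤ : ℕ∞) (fderiv ℝ H) := hH.fderiv_right (mod_cast le_top)
    rw [funext hX]
    exact ((hH.smul h.smoothZ).sub (ContDiff.sum fun i _ =>
      ((hdH.clm_apply (h.smoothA i)).smul (h.smoothB i)).sub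
      ((hdH.clm_apply (h.smoothB i)).smul (h.smoothA i)))).differentiable (by simp)
  have hframe : extDForm α x (X x) + fderiv ℝ H x = fderiv ℝ H x (Z x) • α x := by
    refine h.ext_frame hdim x ?_ (fun i => ?_) (fun i => ?_) <;>
      rw [add_apply, extDForm_apply, hX x]
    · rw [h.extD_smul_sub_sum_Z]; simp [h.reeb.1 x]
    · rw [h.extD_smul_sub_sum_A hαd]; simp [h.tangentA i x]
    · rw [h.extD_smul_sub_sum_B hαd]; simp [h.tangentB i x]
  rw [lieD_eq_extD_add_fderiv hαd (hXd x), funext hαX]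
  simpa using DFunLike.congr_fun hframe v
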